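/- arXiv:1608.08722 — 2 statements merged into one kernel-verified Lean document; each statement's English description precedes it below -/
import Mathlib

section
/- If λ is a Dirichlet eigenvalue with eigenspace E_λ and φ is the projection of 1 onto E_λ, then for every positive integer k, a_λ² = (λ^k / k!) ∫_Ω φ · u_k dx, where a_λ² = ∫_Ω φ² dx. -/
open MeasureTheory Real Filter Function

noncomputable section

abbrev Eucl (n : ℕ) := EuclideanSpace ℝ (Fin n)

/-- The Laplacian of a real-valued function on Euclidean space,
as the sum of the pure second partial derivatives. -/
def lap {n : ℕ} (f : Eucl n → ℝ) (x : Eucl n) : ℝ :=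
  ∑ i : Fin n, fderiv ℝ (fun y => fderiv ℝ f y (EuclideanSpace.single i 1)) x
    (EuclideanSpace.single i 1)

/-- The Poisson hierarchy on a domain `Ω`: `Δ u₁ = -1`, `Δ u_k = -k u_{k-1}` in `Ω`,
each `u_k` smooth up to the boundary and vanishing on `∂Ω`. -/
structure PoissonHierarchy {n : ℕ} (Ω : Set (Eucl n)) (u : ℕ → Eucl n → ℝ) : Prop where
  smooth : ∀ k, ContDiffOn ℝ (⊤ : ℕ∞) (u k) (closure Ω)
  boundary : ∀ k, 1 ≤ k → ∀ x ∈ frontier Ω, u k x = 0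
  lap_one : ∀ x ∈ Ω, lap (u 1) x = -1
  lap_succ : ∀ k, 2 ≤ k → ∀ x ∈ Ω, lap (u k) x = -(k : ℝ) * u (k - 1) x

/-- The set of Rayleigh quotients of admissible (smooth up to the boundary,
vanishing on the boundary, nonzero) test functions; the principal Dirichlet
eigenvalue is its infimum. -/
def rayleighSet {n : ℕ} (Ω : Set (Eucl n)) : Set ℝ :=
  {r | ∃ φ : Eucl n → ℝ, ContDiffOn ℝ (⊤ : ℕ∞) φ (closure Ω) ∧ (∀ x ∈ frontier Ω, φ x = 0) ∧
    (∫ x in Ω, (φ x) ^ 2) ≠ 0 ∧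
    r = (∫ x in Ω, ‖gradient φ x‖ ^ 2) / ∫ x in Ω, (φ x) ^ 2}

section AuxiliaryLemmas

open Set Topology Bornology

lemma oneD_integral_deriv_eq_zero (U : Set ℝ) (hU : IsOpen U) (hUb : Bornology.IsBounded U)
    (w : ℝ → ℝ) (hw : Continuous w) (hw0 : ∀ t, t ∉ U → w t = 0)
    (hdiff : ∀ t ∈ U, DifferentiableAt ℝ w t)
    (M : ℝ) (hM : ∀ t ∈ U, |deriv w t| ≤ M) :
    ∫ t in U, deriv w t = 0 := by
  classical
  have hmeas : Measurable (deriv w) := measurable_deriv w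
  have hUfin : volume U < ⊤ := hUb.measure_lt_top
  have hint : IntegrableOn (deriv w) U := by
    refine Integrable.mono' (g := fun _ => M) ?_ hmeas.aestronglyMeasurable.restrict ?_
    · exact integrableOn_const hUfin.ne
    · filter_upwards [ae_restrict_mem hU.measurableSet] with t ht
      simpa [Real.norm_eq_abs] using hM t ht
  -- the set of connected components (each contains a rational)
  set S : Set (Set ℝ) := (fun q : ℚ => connectedComponentIn U (q : ℝ)) '' {q : ℚ | (q : ℝ) ∈ U}
    with hS
  have hScount : S.Countable := (Set.to_countable _).image _
  have hSopen : ∀ s ∈ S, IsOpen s := by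
    rintro s ⟨q, hq, rfl⟩; exact hU.connectedComponentIn
  have hSsub : ∀ s ∈ S, s ⊆ U := by
    rintro s ⟨q, hq, rfl⟩; exact connectedComponentIn_subset _ _
  have hSdisj : ∀ s ∈ S, ∀ t ∈ S, s ≠ t → Disjoint s t := by
    rintro s ⟨q, hq, rfl⟩ t ⟨r, hr, rfl⟩ hne
    rw [Set.disjoint_left]
    intro z hzs hzt
    exact hne ((connectedComponentIn_eq hzs).trans (connectedComponentIn_eq hzt).symm)
  have hUnion : ⋃₀ S = U := by
    apply Set.Subset.antisymm (Set.sUnion_subset hSsub)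
    intro x hx
    have hxc : connectedComponentIn U x ∈ 𝓝 x :=
      (hU.connectedComponentIn (x := x)).mem_nhds (mem_connectedComponentIn hx)
    obtain ⟨ε, hε, hball⟩ := Metric.mem_nhds_iff.1 hxc
    obtain ⟨q, hq1, hq2⟩ := exists_rat_btwn (show x - ε < x by linarith)
    have hqmem : (q : ℝ) ∈ connectedComponentIn U x := by
      apply hball
      simp only [Metric.mem_ball, Real.dist_eq, abs_lt]
      constructor <;> linarith
    have hqU : (q : ℝ) ∈ U := connectedComponentIn_subset _ _ hqmem
    refine ⟨connectedComponentIn U (q : ℝ), ⟨q, hqU, rfl⟩, ?_⟩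
    rw [← connectedComponentIn_eq hqmem]
    exact mem_connectedComponentIn hx
  -- each component has zero integral
  have hcomp : ∀ s ∈ S, ∫ t in s, deriv w t = 0 := by
    rintro s ⟨q, hq, rfl⟩
    set s := connectedComponentIn U (q : ℝ) with hs
    have hsopen : IsOpen s := hU.connectedComponentIn
    have hssub : s ⊆ U := connectedComponentIn_subset _ _
    have hsne : s.Nonempty := ⟨_, mem_connectedComponentIn hq⟩
    have hsbdd : Bornology.IsBounded s := hUb.subset hssub
    have hbdd_above : BddAbove s := hsbdd.bddAbove
    have hbdd_below : BddBelow s := hsbdd.bddBelow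
    set a := sInf s with ha
    set b := sSup s with hb
    have hconn : IsPreconnected s := isPreconnected_connectedComponentIn
    have hoc : OrdConnected s := hconn.ordConnected
    -- a ∉ U and b ∉ U
    have hanotU : a ∉ U := by
      intro haU
      obtain ⟨ε, hε, hball⟩ := Metric.isOpen_iff.1 hU a haU
      -- the set s ∪ ball a ε is preconnected, inside U, contains q
      obtain ⟨x, hxs', hxlt⟩ : ∃ x ∈ s, x < a + ε :=
        (csInf_lt_iff hbdd_below hsne).1 (by linarith)
      have hax : a ≤ x := csInf_le hbdd_below hxs'
      have hIoo : Set.Ioo (a - ε) (a + ε) ⊆ U := by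
        intro y hy
        apply hball
        simp only [Metric.mem_ball, Real.dist_eq, abs_lt]
        exact ⟨by linarith [hy.1], by linarith [hy.2]⟩
      have hpre : IsPreconnected (s ∪ Set.Ioo (a - ε) (a + ε)) := by
        apply IsPreconnected.union x hxs' (Set.mem_Ioo.mpr ⟨by linarith, hxlt⟩) hconn isPreconnected_Ioo
      have hsub2 : s ∪ Set.Ioo (a - ε) (a + ε) ⊆ U := Set.union_subset hssub hIoo
      have : s ∪ Set.Ioo (a - ε) (a + ε) ⊆ s := by
        rw [hs]
        apply hpre.subset_connectedComponentIn _ hsub2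
        exact Set.mem_union_left _ (mem_connectedComponentIn hq)
      have haIn : a ∈ s := this (Set.mem_union_right _ (Set.mem_Ioo.mpr ⟨by linarith, by linarith⟩))
      -- but a = sInf s ∈ s open means there are points below a in s
      obtain ⟨δ, hδ, hballa⟩ := Metric.isOpen_iff.1 hsopen a haIn
      have : a - δ / 2 ∈ s := by
        apply hballa
        rw [Metric.mem_ball, Real.dist_eq, abs_lt]
        constructor <;> linarith
      have := csInf_le hbdd_below this
      linarith
    have hbnotU : b ∉ U := by
      intro hbU
      obtain ⟨ε, hε, hball⟩ := Metric.isOpen_iff.1 hU b hbU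
      obtain ⟨x, hxs', hxlt⟩ : ∃ x ∈ s, b - ε < x :=
        (lt_csSup_iff hbdd_above hsne).1 (by linarith)
      have hax : x ≤ b := le_csSup hbdd_above hxs'
      have hIoo : Set.Ioo (b - ε) (b + ε) ⊆ U := by
        intro y hy
        apply hball
        simp only [Metric.mem_ball, Real.dist_eq, abs_lt]
        exact ⟨by linarith [hy.1], by linarith [hy.2]⟩
      have hpre : IsPreconnected (s ∪ Set.Ioo (b - ε) (b + ε)) := by
        apply IsPreconnected.union x hxs' (Set.mem_Ioo.mpr ⟨hxlt, by linarith⟩) hconn isPreconnected_Ioo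
      have hsub2 : s ∪ Set.Ioo (b - ε) (b + ε) ⊆ U := Set.union_subset hssub hIoo
      have : s ∪ Set.Ioo (b - ε) (b + ε) ⊆ s := by
        rw [hs]
        apply hpre.subset_connectedComponentIn _ hsub2
        exact Set.mem_union_left _ (mem_connectedComponentIn hq)
      have hbIn : b ∈ s := this (Set.mem_union_right _ (Set.mem_Ioo.mpr ⟨by linarith, by linarith⟩))
      obtain ⟨δ, hδ, hballb⟩ := Metric.isOpen_iff.1 hsopen b hbIn
      have : b + δ / 2 ∈ s := by
        apply hballb
        rw [Metric.mem_ball, Real.dist_eq, abs_lt]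
        constructor <;> linarith
      have := le_csSup hbdd_above this
      linarith
    have hanots : a ∉ s := fun h => hanotU (hssub h)
    have hbnots : b ∉ s := fun h => hbnotU (hssub h)
    -- s = Ioo a b
    have hseq : s = Set.Ioo a b := by
      apply Set.Subset.antisymm
      · intro x hx
        have h1 : a ≤ x := csInf_le hbdd_below hx
        have h2 : x ≤ b := le_csSup hbdd_above hx
        refine ⟨lt_of_le_of_ne h1 ?_, lt_of_le_of_ne h2 ?_⟩
        · rintro rfl; exact hanots hx
        · rintro rfl; exact hbnots hx
      · intro x hx
        obtain ⟨y, hy, hylt⟩ : ∃ y ∈ s, y < x := by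
          by_contra h
          push_neg at h
          exact absurd (le_csInf hsne h) (by linarith [hx.1])
        obtain ⟨z, hz, hzgt⟩ : ∃ z ∈ s, x < z := by
          by_contra h
          push_neg at h
          exact absurd (csSup_le hsne h) (by linarith [hx.2])
        exact hoc.out hy hz ⟨le_of_lt hylt, le_of_lt hzgt⟩
    have hab : a ≤ b := by
      obtain ⟨x, hx⟩ := hsne
      exact le_trans (csInf_le hbdd_below hx) (le_csSup hbdd_above hx)
    -- FTC
    have hwa : w a = 0 := hw0 a hanotU
    have hwb : w b = 0 := hw0 b hbnotU
    have hIoosub : Set.Ioo a b ⊆ U := hseq ▸ hssub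
    have hintIoc : IntervalIntegrable (deriv w) volume a b := by
      rw [intervalIntegrable_iff_integrableOn_Ioc_of_le hab]
      have : IntegrableOn (deriv w) (Set.Ioo a b) := hint.mono_set hIoosub
      exact this.congr_set_ae Ioo_ae_eq_Ioc.symm
    have hftc : ∫ y in a..b, deriv w y = w b - w a := by
      apply intervalIntegral.integral_eq_sub_of_hasDeriv_right_of_le hab
        hw.continuousOn
      · intro x hx
        exact ((hdiff x (hIoosub hx)).hasDerivAt.hasDerivWithinAt)
      · exact hintIoc
    show ∫ t in s, deriv w t = 0
    rw [hseq]
    have h1 : ∫ t in Set.Ioo a b, deriv w t = ∫ t in Set.Ioc a b, deriv w t :=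
      setIntegral_congr_set Ioo_ae_eq_Ioc
    rw [h1, ← intervalIntegral.integral_of_le hab, hftc, hwa, hwb, sub_zero]
  -- sum over components
  have : ∫ t in U, deriv w t = ∑' s : S, ∫ t in (s : Set ℝ), deriv w t := by
    rw [← hUnion, Set.sUnion_eq_iUnion]
    haveI := hScount.to_subtype
    refine integral_iUnion (fun s => (hSopen s s.2).measurableSet) ?_ ?_
    · rintro ⟨s, hs⟩ ⟨t, ht⟩ hne
      exact hSdisj s hs t ht (fun h => hne (Subtype.ext h))
    · rw [← Set.sUnion_eq_iUnion, hUnion]; exact hint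
  rw [this]
  have h0 : ∀ s : S, ∫ t in (s : Set ℝ), deriv w t = 0 := fun s => hcomp s s.2
  calc ∑' s : S, ∫ t in (s : Set ℝ), deriv w t = ∑' _ : S, (0 : ℝ) := tsum_congr h0
    _ = 0 := tsum_zero

/-- On a bounded open set whose closure supports a `C²` structure, the first and second
derivatives (as honest `fderiv`s at interior points) are uniformly bounded. -/
lemma deriv_bounds_of_contDiffOn {E : Type*} [NormedAddCommGroup E] [NormedSpace ℝ E]
    (Ω : Set E) (hΩ : IsOpen Ω) (hcomp : IsCompact (closure Ω))
    (f : E → ℝ) (hf : ContDiffOn ℝ 2 f (closure Ω)) :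
    ∃ C : ℝ, 0 ≤ C ∧ ∀ x ∈ Ω, ‖fderiv ℝ f x‖ ≤ C ∧
      ∀ v : E, ‖fderiv ℝ (fun y => fderiv ℝ f y v) x‖ ≤ C * ‖v‖ := by
  classical
  set K := closure Ω with hK
  -- local bounds around every point of K
  have hloc : ∀ x ∈ K, ∃ r > (0:ℝ), ∃ C, 0 ≤ C ∧ ∀ y ∈ Metric.ball x r ∩ Ω,
      ‖fderiv ℝ f y‖ ≤ C ∧ ∀ v : E, ‖fderiv ℝ (fun z => fderiv ℝ f z v) y‖ ≤ C * ‖v‖ := by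
    intro x hx
    have hcd : ContDiffWithinAt ℝ 2 f K x := hf x hx
    obtain ⟨u, hu, p, hp⟩ := contDiffWithinAt_nat.1 hcd
    rw [Set.insert_eq_self.2 hx] at hu
    obtain ⟨t, htop, hxt, htu⟩ := mem_nhdsWithin.1 hu
    have hxu : x ∈ u := htu ⟨hxt, hx⟩
    set C : ℝ := max (‖p x 1‖ + 1) (‖p x 2‖ + 1) with hC
    have hCpos : 0 ≤ C := le_trans (by positivity) (le_max_left _ _)
    have hc1 : ∀ᶠ y in 𝓝[u] x, ‖p y 1‖ < ‖p x 1‖ + 1 :=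
      Filter.Tendsto.eventually_lt_const (by linarith)
        ((hp.cont 1 (by norm_num)).continuousWithinAt hxu).norm
    have hc2 : ∀ᶠ y in 𝓝[u] x, ‖p y 2‖ < ‖p x 2‖ + 1 :=
      Filter.Tendsto.eventually_lt_const (by linarith)
        ((hp.cont 2 (by norm_num)).continuousWithinAt hxu).norm
    obtain ⟨t1, ht1op, hxt1, ht1⟩ := mem_nhdsWithin.1 hc1
    obtain ⟨t2, ht2op, hxt2, ht2⟩ := mem_nhdsWithin.1 hc2
    obtain ⟨r, hr, hball⟩ := Metric.isOpen_iff.1 (htop.inter (ht1op.inter ht2op)) x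
      ⟨hxt, hxt1, hxt2⟩
    refine ⟨r, hr, C, hCpos, ?_⟩
    rintro y ⟨hyb, hyΩ⟩
    have hyK : y ∈ K := subset_closure hyΩ
    have hyt : y ∈ t := (hball hyb).1
    have hyu : y ∈ u := htu ⟨hyt, hyK⟩
    have hb1 : ‖p y 1‖ ≤ C :=
      le_trans (le_of_lt (ht1 ⟨(hball hyb).2.1, hyu⟩)) (le_max_left _ _)
    have hb2 : ‖p y 2‖ ≤ C :=
      le_trans (le_of_lt (ht2 ⟨(hball hyb).2.2, hyu⟩)) (le_max_right _ _)
    -- `u` is a neighbourhood of every point of `t ∩ Ω`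
    have hmem : ∀ z ∈ t ∩ Ω, u ∈ 𝓝 z := by
      rintro z ⟨hzt, hzΩ⟩
      exact mem_nhds_iff.2 ⟨t ∩ Ω, fun w hw => htu ⟨hw.1, subset_closure hw.2⟩,
        htop.inter hΩ, ⟨hzt, hzΩ⟩⟩
    have hfd : ∀ z ∈ t ∩ Ω, HasFDerivAt f
        (continuousMultilinearCurryFin1 ℝ E ℝ (p z 1)) z := by
      rintro z hz
      exact (hp.hasFDerivWithinAt (by norm_num) (htu ⟨hz.1, subset_closure hz.2⟩)).hasFDerivAt
        (hmem z hz)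
    have hytΩ : y ∈ t ∩ Ω := ⟨hyt, hyΩ⟩
    constructor
    · rw [(hfd y hytΩ).fderiv]
      simpa using hb1
    · intro v
      -- the evaluation continuous linear map
      set L : (ContinuousMultilinearMap ℝ (fun _ : Fin 1 => E) ℝ) →L[ℝ] ℝ :=
        (ContinuousLinearMap.apply ℝ ℝ v).comp
          (continuousMultilinearCurryFin1 ℝ E ℝ).toLinearIsometry.toContinuousLinearMap
        with hL
      have hLapp : ∀ m : ContinuousMultilinearMap ℝ (fun _ : Fin 1 => E) ℝ,
          L m = (continuousMultilinearCurryFin1 ℝ E ℝ m) v := fun m => rfl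
      have hder : HasFDerivAt (fun z => p z 1) ((p y 2).curryLeft) y :=
        (hp.fderivWithin 1 (by norm_num) y hyu).hasFDerivAt (hmem y hytΩ)
      have hcomp2 : HasFDerivAt (fun z => L (p z 1)) (L.comp ((p y 2).curryLeft)) y :=
        L.hasFDerivAt.comp y hder
      have heq : (fun z => fderiv ℝ f z v) =ᶠ[𝓝 y] (fun z => L (p z 1)) := by
        filter_upwards [ (htop.inter hΩ).mem_nhds hytΩ ] with z hz
        rw [(hfd z hz).fderiv, hLapp]
      rw [heq.fderiv_eq, hcomp2.fderiv]
      have h1 : ‖L‖ ≤ ‖v‖ := by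
        refine ContinuousLinearMap.opNorm_le_bound _ (norm_nonneg v) fun m => ?_
        rw [hLapp]
        calc ‖(continuousMultilinearCurryFin1 ℝ E ℝ m) v‖
            ≤ ‖continuousMultilinearCurryFin1 ℝ E ℝ m‖ * ‖v‖ :=
              ContinuousLinearMap.le_opNorm _ _
          _ = ‖m‖ * ‖v‖ := by rw [LinearIsometryEquiv.norm_map]
          _ = ‖v‖ * ‖m‖ := mul_comm _ _
      calc ‖L.comp ((p y 2).curryLeft)‖ ≤ ‖L‖ * ‖(p y 2).curryLeft‖ :=
            ContinuousLinearMap.opNorm_comp_le _ _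
        _ = ‖L‖ * ‖p y 2‖ := by rw [ContinuousMultilinearMap.curryLeft_norm]
        _ ≤ ‖v‖ * C := mul_le_mul h1 hb2 (norm_nonneg _) (norm_nonneg _)
        _ = C * ‖v‖ := mul_comm _ _
  -- compactness: extract a finite subcover
  choose! r hr C0 hC0 hloc2 using hloc
  have hcov : ∀ x ∈ K, Metric.ball x (r x) ∈ 𝓝 x := fun x hx =>
    Metric.ball_mem_nhds x (hr x hx)
  obtain ⟨s, hsK, hscov⟩ := hcomp.elim_nhds_subcover (fun x => Metric.ball x (r x))
    (fun x hx => hcov x hx)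
  obtain ⟨C, hC'⟩ := Finset.exists_le (s.image C0)
  have hC : ∀ x ∈ s, C0 x ≤ C := fun x hx => hC' _ (Finset.mem_image_of_mem C0 hx)
  refine ⟨max C 0, le_max_right _ _, ?_⟩
  intro x hxΩ
  have hxK : x ∈ K := subset_closure hxΩ
  obtain ⟨y, hys, hxball⟩ := Set.mem_iUnion₂.1 (hscov hxK)
  have := hloc2 y (hsK y hys) x ⟨hxball, hxΩ⟩
  refine ⟨le_trans this.1 (le_trans (hC y hys) (le_max_left _ _)), fun v => ?_⟩
  refine le_trans (this.2 v) ?_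
  exact mul_le_mul_of_nonneg_right (le_trans (hC y hys) (le_max_left _ _)) (norm_nonneg v)

lemma continuous_indicator_of_frontier {E : Type*} [TopologicalSpace E]
    (Ω : Set E) (hΩ : IsOpen Ω) (V : E → ℝ) (hc : ContinuousOn V Ω)
    (hfr : ∀ x ∈ frontier Ω, Filter.Tendsto V (𝓝[Ω] x) (𝓝 0)) :
    Continuous (Ω.indicator V) := by
  rw [continuous_iff_continuousAt]
  intro x
  by_cases hx : x ∈ Ω
  · exact (hc.continuousAt (hΩ.mem_nhds hx)).congr
      (Filter.eventually_of_mem (hΩ.mem_nhds hx) fun y hy => (Set.indicator_of_mem hy V).symm)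
  by_cases hx2 : x ∈ closure Ω
  · -- frontier point
    have hxf : x ∈ frontier Ω := by
      rw [hΩ.frontier_eq]; exact ⟨hx2, hx⟩
    have hval : Ω.indicator V x = 0 := Set.indicator_of_notMem hx V
    unfold ContinuousAt
    rw [hval, nhds_eq_nhdsWithin_sup_nhdsWithin x (I₁ := Ω) (I₂ := Ωᶜ) (by simp)]
    rw [tendsto_sup]
    constructor
    · refine (hfr x hxf).congr' ?_
      filter_upwards [self_mem_nhdsWithin] with y hy
      exact (Set.indicator_of_mem hy V).symm
    · refine tendsto_const_nhds.congr' ?_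
      filter_upwards [self_mem_nhdsWithin] with y hy
      exact (Set.indicator_of_notMem hy V).symm
  · have hmem : (closure Ω)ᶜ ∈ 𝓝 x := (isClosed_closure.isOpen_compl).mem_nhds hx2
    have hval : Ω.indicator V x = 0 := Set.indicator_of_notMem hx _
    refine (continuousAt_const (y := (0:ℝ))).congr ?_
    filter_upwards [hmem] with y hy
    exact (Set.indicator_of_notMem (fun h => hy (subset_closure h)) V).symm

lemma integral_partial_eq_zero {n : ℕ} (Ω : Set (EuclideanSpace ℝ (Fin n))) (hΩ : IsOpen Ω)
    (hb : Bornology.IsBounded Ω) (V : EuclideanSpace ℝ (Fin n) → ℝ) (i : Fin n)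
    (hWc : Continuous (Ω.indicator V))
    (hdiff : ∀ x ∈ Ω, DifferentiableAt ℝ V x)
    (M : ℝ) (hM : ∀ x ∈ Ω, |fderiv ℝ V x (EuclideanSpace.single i 1)| ≤ M) :
    ∫ x in Ω, fderiv ℝ V x (EuclideanSpace.single i 1) = 0 := by
  classical
  cases n with
  | zero => exact i.elim0
  | succ m =>
  set ei : EuclideanSpace ℝ (Fin (m+1)) := EuclideanSpace.single i 1 with hei
  set G : EuclideanSpace ℝ (Fin (m+1)) → ℝ := Ω.indicator (fun x => fderiv ℝ V x ei) with hG
  have hGmeas : Measurable G :=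
    (measurable_fderiv_apply_const (𝕜 := ℝ) (f := V) ei).indicator hΩ.measurableSet
  have hGint : Integrable G := by
    refine Integrable.mono' (g := Ω.indicator fun _ => |M|) ?_ hGmeas.aestronglyMeasurable ?_
    · rw [integrable_indicator_iff hΩ.measurableSet]
      exact integrableOn_const hb.measure_lt_top.ne
    · refine Filter.Eventually.of_forall fun x => ?_
      by_cases hx : x ∈ Ω
      · simp only [hG, Set.indicator_of_mem hx, Real.norm_eq_abs]
        exact le_trans (hM x hx) (le_abs_self M)
      · simp [hG, Set.indicator_of_notMem hx]
  rw [← integral_indicator hΩ.measurableSet]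
  set ψ := (MeasurableEquiv.toLp 2 (Fin (m+1) → ℝ)).symm with hψdef
  have hψ : MeasurePreserving (ψ.symm) :=
    (EuclideanSpace.volume_preserving_symm_measurableEquiv_toLp (Fin (m+1))).symm
  set pe := MeasurableEquiv.piFinSuccAbove (fun _ : Fin (m+1) => ℝ) i with hpedef
  have hpe : MeasurePreserving (pe.symm) :=
    (MeasureTheory.volume_preserving_piFinSuccAbove (fun _ : Fin (m+1) => ℝ) i).symm
  rw [← hψ.integral_comp ψ.symm.measurableEmbedding G,
    ← hpe.integral_comp pe.symm.measurableEmbedding _]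
  have hGint2 : Integrable (fun z => G (ψ.symm (pe.symm z))) :=
    (MeasurePreserving.integrable_comp_emb hpe pe.symm.measurableEmbedding).2
      ((MeasurePreserving.integrable_comp_emb hψ ψ.symm.measurableEmbedding).2 hGint)
  rw [MeasureTheory.Measure.volume_eq_prod] at hGint2 ⊢
  rw [MeasureTheory.integral_prod_symm _ hGint2]
  have hinner : ∀ y : Fin m → ℝ, (∫ t : ℝ, G (ψ.symm (pe.symm (t, y)))) = 0 := by
    intro y
    set p : ℝ → EuclideanSpace ℝ (Fin (m+1)) := fun t => ψ.symm (pe.symm (t, y)) with hp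
    have hc1 : ∀ t, p t i = t := by
      intro t
      show (pe.symm (t, y) : Fin (m+1) → ℝ) i = t
      rw [hpedef]
      simp [MeasurableEquiv.piFinSuccAbove_symm_apply, Fin.insertNthEquiv]
    have hc2 : ∀ t s (j : Fin (m+1)), j ≠ i → p t j = p s j := by
      intro t s j hj
      obtain ⟨j', rfl⟩ := Fin.exists_succAbove_eq (Ne.symm hj).symm
      show (pe.symm (t, y) : Fin (m+1) → ℝ) _ = (pe.symm (s, y) : Fin (m+1) → ℝ) _
      rw [hpedef]
      simp [MeasurableEquiv.piFinSuccAbove_symm_apply, Fin.insertNthEquiv]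
    have hPeq : ∀ t, p t = p 0 + t • ei := by
      intro t
      ext j
      have h1 : (p 0 + t • ei) j = p 0 j + t * ei j := by simp
      rw [h1]
      by_cases h : j = i
      · subst h; rw [hc1, hc1]; simp [hei, EuclideanSpace.single_apply]
      · rw [hc2 t 0 j h]; simp [h, hei, EuclideanSpace.single_apply]
    have hpc : Continuous p := by
      have : p = fun t => p 0 + t • ei := funext hPeq
      rw [this]
      exact continuous_const.add (continuous_id.smul continuous_const)
    have hpd : ∀ t : ℝ, HasDerivAt p ei t := by
      intro t
      have h0 : HasDerivAt (fun s : ℝ => p 0 + s • ei) ((1:ℝ) • ei) t :=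
        ((hasDerivAt_id t).smul_const ei).const_add (p 0)
      rw [one_smul] at h0
      exact h0.congr_of_eventuallyEq (Filter.Eventually.of_forall fun s => (hPeq s))
    set U : Set ℝ := p ⁻¹' Ω with hU
    have hUopen : IsOpen U := hΩ.preimage hpc
    have habs : ∀ t, |p t i| ≤ ‖p t‖ := by
      intro t
      have h1 : (inner ℝ (EuclideanSpace.single i (1:ℝ)) (p t) : ℝ) = p t i := by
        rw [EuclideanSpace.inner_single_left]; simp
      calc |p t i| = |(inner ℝ (EuclideanSpace.single i (1:ℝ)) (p t) : ℝ)| := by rw [h1]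
        _ ≤ ‖EuclideanSpace.single i (1:ℝ)‖ * ‖p t‖ := abs_real_inner_le_norm _ _
        _ = ‖p t‖ := by rw [EuclideanSpace.norm_single]; simp
    have hUb : Bornology.IsBounded U := by
      obtain ⟨R, hR⟩ := hb.subset_ball 0
      refine (Metric.isBounded_Icc (-R) R).subset ?_
      intro t ht
      have hpt : p t ∈ Metric.ball 0 R := hR ht
      rw [Metric.mem_ball, dist_zero_right] at hpt
      have : |t| ≤ R := by
        rw [← hc1 t]
        exact le_trans (habs t) (le_of_lt hpt)
      rw [Set.mem_Icc]
      exact abs_le.1 this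
    set w : ℝ → ℝ := fun t => Ω.indicator V (p t) with hw
    have hwc : Continuous w := hWc.comp hpc
    have hw0 : ∀ t, t ∉ U → w t = 0 := fun t ht => Set.indicator_of_notMem (show p t ∉ Ω from ht) V
    have hkey : ∀ t ∈ U, DifferentiableAt ℝ w t ∧ deriv w t = fderiv ℝ V (p t) ei := by
      intro t ht
      have hV : HasDerivAt (fun s => V (p s)) (fderiv ℝ V (p t) ei) t :=
        ((hdiff _ ht).hasFDerivAt).comp_hasDerivAt t (hpd t)
      have heq : w =ᶠ[𝓝 t] fun s => V (p s) := by
        filter_upwards [hUopen.mem_nhds ht] with s hs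
        exact Set.indicator_of_mem (show p s ∈ Ω from hs) V
      constructor
      · rw [Filter.EventuallyEq.differentiableAt_iff heq]
        exact hV.differentiableAt
      · rw [heq.deriv_eq, hV.deriv]
    have hzero : ∫ t in U, deriv w t = 0 := by
      refine oneD_integral_deriv_eq_zero U hUopen hUb w hwc hw0
        (fun t ht => (hkey t ht).1) |M| ?_
      intro t ht
      rw [(hkey t ht).2]
      exact le_trans (hM _ ht) (le_abs_self M)
    have hGp : ∀ t, G (p t) = U.indicator (deriv w) t := by
      intro t
      by_cases ht : t ∈ U
      · rw [Set.indicator_of_mem ht, hG, Set.indicator_of_mem (show p t ∈ Ω from ht), (hkey t ht).2]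
      · rw [Set.indicator_of_notMem ht, hG, Set.indicator_of_notMem (show p t ∉ Ω from ht)]
    calc (∫ t : ℝ, G (ψ.symm (pe.symm (t, y)))) = ∫ t : ℝ, U.indicator (deriv w) t := by
          congr 1; funext t; exact hGp t
      _ = ∫ t in U, deriv w t := integral_indicator hUopen.measurableSet
      _ = 0 := hzero
  rw [MeasureTheory.integral_congr_ae (Filter.Eventually.of_forall hinner)]
  simp

lemma green_symm {n : ℕ} (Ω : Set (Eucl n)) (hΩ : IsOpen Ω) (hcomp : IsCompact (closure Ω))
    (f g : Eucl n → ℝ)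
    (hf : ContDiffOn ℝ 2 f (closure Ω)) (hg : ContDiffOn ℝ 2 g (closure Ω))
    (hfb : ∀ x ∈ frontier Ω, f x = 0) (hgb : ∀ x ∈ frontier Ω, g x = 0) :
    ∫ x in Ω, g x * lap f x = ∫ x in Ω, f x * lap g x := by
  classical
  have hb : Bornology.IsBounded Ω := hcomp.isBounded.subset subset_closure
  have hbfin : volume Ω < ⊤ := hb.measure_lt_top
  obtain ⟨Cf, hCf0, hCf⟩ := deriv_bounds_of_contDiffOn Ω hΩ hcomp f hf
  obtain ⟨Cg, hCg0, hCg⟩ := deriv_bounds_of_contDiffOn Ω hΩ hcomp g hg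
  obtain ⟨Af, hAf⟩ := hcomp.exists_bound_of_continuousOn hf.continuousOn
  obtain ⟨Ag, hAg⟩ := hcomp.exists_bound_of_continuousOn hg.continuousOn
  have hAf' : ∀ x ∈ Ω, |f x| ≤ |Af| :=
    fun x hx => le_trans (hAf x (subset_closure hx)) (le_abs_self _)
  have hAg' : ∀ x ∈ Ω, |g x| ≤ |Ag| :=
    fun x hx => le_trans (hAg x (subset_closure hx)) (le_abs_self _)
  set ei : Fin n → Eucl n := fun i => EuclideanSpace.single i 1 with heidef
  have hnei : ∀ i, ‖ei i‖ = 1 := by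
    intro i; rw [heidef]; simp [EuclideanSpace.norm_single]
  set V : Fin n → Eucl n → ℝ :=
    fun i x => g x * fderiv ℝ f x (ei i) - f x * fderiv ℝ g x (ei i) with hV
  -- pointwise differentiability facts on Ω
  have hfa : ∀ x ∈ Ω, ContDiffAt ℝ 2 f x :=
    fun x hx => (hf.mono subset_closure).contDiffAt (hΩ.mem_nhds hx)
  have hga : ∀ x ∈ Ω, ContDiffAt ℝ 2 g x :=
    fun x hx => (hg.mono subset_closure).contDiffAt (hΩ.mem_nhds hx)
  have hfd : ∀ x ∈ Ω, DifferentiableAt ℝ f x :=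
    fun x hx => (hfa x hx).differentiableAt (by norm_num)
  have hgd : ∀ x ∈ Ω, DifferentiableAt ℝ g x :=
    fun x hx => (hga x hx).differentiableAt (by norm_num)
  have hDfd : ∀ i, ∀ x ∈ Ω, DifferentiableAt ℝ (fun y => fderiv ℝ f y (ei i)) x := by
    intro i x hx
    have h1 : ContDiffAt ℝ 1 (fderiv ℝ f) x := (hfa x hx).fderiv_right (by norm_num)
    exact (h1.differentiableAt one_ne_zero).clm_apply (differentiableAt_const _)
  have hDgd : ∀ i, ∀ x ∈ Ω, DifferentiableAt ℝ (fun y => fderiv ℝ g y (ei i)) x := by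
    intro i x hx
    have h1 : ContDiffAt ℝ 1 (fderiv ℝ g) x := (hga x hx).fderiv_right (by norm_num)
    exact (h1.differentiableAt one_ne_zero).clm_apply (differentiableAt_const _)
  have hVd : ∀ i, ∀ x ∈ Ω, DifferentiableAt ℝ (V i) x := by
    intro i x hx
    exact ((hgd x hx).mul (hDfd i x hx)).sub ((hfd x hx).mul (hDgd i x hx))
  -- the second-derivative formula for the partial of V i
  have hVpartial : ∀ i, ∀ x ∈ Ω, fderiv ℝ (V i) x (ei i) =
      g x * fderiv ℝ (fun y => fderiv ℝ f y (ei i)) x (ei i)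
      - f x * fderiv ℝ (fun y => fderiv ℝ g y (ei i)) x (ei i) := by
    intro i x hx
    have h1 : fderiv ℝ (fun y => g y * fderiv ℝ f y (ei i)) x
        = g x • fderiv ℝ (fun y => fderiv ℝ f y (ei i)) x
          + fderiv ℝ f x (ei i) • fderiv ℝ g x :=
      fderiv_mul (hgd x hx) (hDfd i x hx)
    have h2 : fderiv ℝ (fun y => f y * fderiv ℝ g y (ei i)) x
        = f x • fderiv ℝ (fun y => fderiv ℝ g y (ei i)) x
          + fderiv ℝ g x (ei i) • fderiv ℝ f x :=
      fderiv_mul (hfd x hx) (hDgd i x hx)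
    have h3 : fderiv ℝ (V i) x
        = fderiv ℝ (fun y => g y * fderiv ℝ f y (ei i)) x
          - fderiv ℝ (fun y => f y * fderiv ℝ g y (ei i)) x :=
      fderiv_sub ((hgd x hx).mul (hDfd i x hx)) ((hfd x hx).mul (hDgd i x hx))
    rw [h3, h1, h2]
    simp only [ContinuousLinearMap.sub_apply, ContinuousLinearMap.add_apply,
      ContinuousLinearMap.smul_apply, smul_eq_mul]
    ring
  -- continuity of the indicator extension
  have hfcΩ : ContinuousOn f Ω := hf.continuousOn.mono subset_closure
  have hgcΩ : ContinuousOn g Ω := hg.continuousOn.mono subset_closure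
  have hDfc : ∀ i, ContinuousOn (fun y => fderiv ℝ f y (ei i)) Ω := by
    intro i
    exact ((hf.mono subset_closure).continuousOn_fderiv_of_isOpen hΩ (by norm_num)).clm_apply
      continuousOn_const
  have hDgc : ∀ i, ContinuousOn (fun y => fderiv ℝ g y (ei i)) Ω := by
    intro i
    exact ((hg.mono subset_closure).continuousOn_fderiv_of_isOpen hΩ (by norm_num)).clm_apply
      continuousOn_const
  have hDfbound : ∀ i, ∀ x ∈ Ω, |fderiv ℝ f x (ei i)| ≤ Cf := by
    intro i x hx
    calc |fderiv ℝ f x (ei i)| ≤ ‖fderiv ℝ f x‖ * ‖ei i‖ :=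
          (fderiv ℝ f x).le_opNorm _
      _ ≤ Cf * 1 := by rw [hnei i]; exact mul_le_mul_of_nonneg_right (hCf x hx).1 zero_le_one
      _ = Cf := mul_one _
  have hDgbound : ∀ i, ∀ x ∈ Ω, |fderiv ℝ g x (ei i)| ≤ Cg := by
    intro i x hx
    calc |fderiv ℝ g x (ei i)| ≤ ‖fderiv ℝ g x‖ * ‖ei i‖ :=
          (fderiv ℝ g x).le_opNorm _
      _ ≤ Cg * 1 := by rw [hnei i]; exact mul_le_mul_of_nonneg_right (hCg x hx).1 zero_le_one
      _ = Cg := mul_one _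
  have hWc : ∀ i, Continuous (Ω.indicator (V i)) := by
    intro i
    apply continuous_indicator_of_frontier Ω hΩ (V i)
      (((hgcΩ.mul (hDfc i))).sub ((hfcΩ.mul (hDgc i))))
    intro x hx
    have hxc : x ∈ closure Ω := frontier_subset_closure hx
    have hft : Filter.Tendsto f (𝓝[Ω] x) (𝓝 0) := by
      have h0 : Filter.Tendsto f (𝓝[Ω] x) (𝓝 (f x)) :=
        ((hf.continuousOn x hxc).mono (subset_closure (s := Ω))).tendsto
      rwa [hfb x hx] at h0
    have hgt : Filter.Tendsto g (𝓝[Ω] x) (𝓝 0) := by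
      have h0 : Filter.Tendsto g (𝓝[Ω] x) (𝓝 (g x)) :=
        ((hg.continuousOn x hxc).mono (subset_closure (s := Ω))).tendsto
      rwa [hgb x hx] at h0
    have hbound : ∀ᶠ y in 𝓝[Ω] x, ‖V i y‖ ≤ |g y| * Cf + |f y| * Cg := by
      filter_upwards [self_mem_nhdsWithin] with y hy
      rw [Real.norm_eq_abs, hV]
      calc |g y * fderiv ℝ f y (ei i) - f y * fderiv ℝ g y (ei i)|
          ≤ |g y * fderiv ℝ f y (ei i)| + |f y * fderiv ℝ g y (ei i)| := abs_sub _ _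
        _ = |g y| * |fderiv ℝ f y (ei i)| + |f y| * |fderiv ℝ g y (ei i)| := by
            rw [abs_mul, abs_mul]
        _ ≤ |g y| * Cf + |f y| * Cg := by
            gcongr
            · exact hDfbound i y hy
            · exact hDgbound i y hy
    have hlim : Filter.Tendsto (fun y => |g y| * Cf + |f y| * Cg) (𝓝[Ω] x) (𝓝 0) := by
      have := ((hgt.abs.mul_const Cf).add (hft.abs.mul_const Cg))
      simpa using this
    exact squeeze_zero_norm' hbound hlim
  -- the uniform bound on the partial derivatives of V i
  set M : ℝ := |Ag| * Cf + |Af| * Cg with hM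
  have hMb : ∀ i, ∀ x ∈ Ω, |fderiv ℝ (V i) x (ei i)| ≤ M := by
    intro i x hx
    rw [hVpartial i x hx]
    have hd2f : |fderiv ℝ (fun y => fderiv ℝ f y (ei i)) x (ei i)| ≤ Cf := by
      calc |fderiv ℝ (fun y => fderiv ℝ f y (ei i)) x (ei i)|
          ≤ ‖fderiv ℝ (fun y => fderiv ℝ f y (ei i)) x‖ * ‖ei i‖ :=
            (fderiv ℝ (fun y => fderiv ℝ f y (ei i)) x).le_opNorm _
        _ ≤ (Cf * ‖ei i‖) * ‖ei i‖ :=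
            mul_le_mul_of_nonneg_right ((hCf x hx).2 (ei i)) (norm_nonneg _)
        _ = Cf := by rw [hnei i]; ring
    have hd2g : |fderiv ℝ (fun y => fderiv ℝ g y (ei i)) x (ei i)| ≤ Cg := by
      calc |fderiv ℝ (fun y => fderiv ℝ g y (ei i)) x (ei i)|
          ≤ ‖fderiv ℝ (fun y => fderiv ℝ g y (ei i)) x‖ * ‖ei i‖ :=
            (fderiv ℝ (fun y => fderiv ℝ g y (ei i)) x).le_opNorm _
        _ ≤ (Cg * ‖ei i‖) * ‖ei i‖ :=
            mul_le_mul_of_nonneg_right ((hCg x hx).2 (ei i)) (norm_nonneg _)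
        _ = Cg := by rw [hnei i]; ring
    calc |g x * fderiv ℝ (fun y => fderiv ℝ f y (ei i)) x (ei i)
          - f x * fderiv ℝ (fun y => fderiv ℝ g y (ei i)) x (ei i)|
        ≤ |g x * fderiv ℝ (fun y => fderiv ℝ f y (ei i)) x (ei i)|
          + |f x * fderiv ℝ (fun y => fderiv ℝ g y (ei i)) x (ei i)| := abs_sub _ _
      _ = |g x| * |fderiv ℝ (fun y => fderiv ℝ f y (ei i)) x (ei i)|
          + |f x| * |fderiv ℝ (fun y => fderiv ℝ g y (ei i)) x (ei i)| := by
          rw [abs_mul, abs_mul]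
      _ ≤ |Ag| * Cf + |Af| * Cg := add_le_add
            (mul_le_mul (hAg' x hx) hd2f (abs_nonneg _) (abs_nonneg _))
            (mul_le_mul (hAf' x hx) hd2g (abs_nonneg _) (abs_nonneg _))
  -- apply the divergence result
  have hzero : ∀ i, ∫ x in Ω, fderiv ℝ (V i) x (ei i) = 0 := by
    intro i
    exact integral_partial_eq_zero Ω hΩ hb (V i) i (hWc i) (hVd i) M (hMb i)
  -- integrability of each partial
  have hIVi : ∀ i : Fin n, IntegrableOn (fun x => fderiv ℝ (V i) x (ei i)) Ω := by
    intro i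
    refine Integrable.mono' (g := fun _ => M) (integrableOn_const hbfin.ne)
      ((measurable_fderiv_apply_const (𝕜 := ℝ) (f := V i) (ei i)).aestronglyMeasurable.restrict)
      ?_
    filter_upwards [ae_restrict_mem hΩ.measurableSet] with x hx
    simpa [Real.norm_eq_abs] using hMb i x hx
  -- measurability of lap
  have hlapfm : Measurable (lap f) := by
    apply Finset.measurable_sum
    intro i _
    exact measurable_fderiv_apply_const (𝕜 := ℝ) (f := fun y => fderiv ℝ f y (EuclideanSpace.single i 1)) _
  have hlapgm : Measurable (lap g) := by
    apply Finset.measurable_sum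
    intro i _
    exact measurable_fderiv_apply_const (𝕜 := ℝ) (f := fun y => fderiv ℝ g y (EuclideanSpace.single i 1)) _
  have hlapfb : ∀ x ∈ Ω, |lap f x| ≤ (n : ℝ) * Cf := by
    intro x hx
    calc |lap f x| ≤ ∑ i : Fin n,
          |fderiv ℝ (fun y => fderiv ℝ f y (EuclideanSpace.single i 1)) x
            (EuclideanSpace.single i 1)| := Finset.abs_sum_le_sum_abs _ _
      _ ≤ ∑ _i : Fin n, Cf := by
          apply Finset.sum_le_sum
          intro i _
          have hd2f : |fderiv ℝ (fun y => fderiv ℝ f y (ei i)) x (ei i)| ≤ Cf := by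
            calc |fderiv ℝ (fun y => fderiv ℝ f y (ei i)) x (ei i)|
                ≤ ‖fderiv ℝ (fun y => fderiv ℝ f y (ei i)) x‖ * ‖ei i‖ :=
                  (fderiv ℝ (fun y => fderiv ℝ f y (ei i)) x).le_opNorm _
              _ ≤ (Cf * ‖ei i‖) * ‖ei i‖ :=
                  mul_le_mul_of_nonneg_right ((hCf x hx).2 (ei i)) (norm_nonneg _)
              _ = Cf := by rw [hnei i]; ring
          exact hd2f
      _ = (n : ℝ) * Cf := by simp [Finset.sum_const, Finset.card_univ]
  have hlapgb : ∀ x ∈ Ω, |lap g x| ≤ (n : ℝ) * Cg := by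
    intro x hx
    calc |lap g x| ≤ ∑ i : Fin n,
          |fderiv ℝ (fun y => fderiv ℝ g y (EuclideanSpace.single i 1)) x
            (EuclideanSpace.single i 1)| := Finset.abs_sum_le_sum_abs _ _
      _ ≤ ∑ _i : Fin n, Cg := by
          apply Finset.sum_le_sum
          intro i _
          have hd2g : |fderiv ℝ (fun y => fderiv ℝ g y (ei i)) x (ei i)| ≤ Cg := by
            calc |fderiv ℝ (fun y => fderiv ℝ g y (ei i)) x (ei i)|
                ≤ ‖fderiv ℝ (fun y => fderiv ℝ g y (ei i)) x‖ * ‖ei i‖ :=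
                  (fderiv ℝ (fun y => fderiv ℝ g y (ei i)) x).le_opNorm _
              _ ≤ (Cg * ‖ei i‖) * ‖ei i‖ :=
                  mul_le_mul_of_nonneg_right ((hCg x hx).2 (ei i)) (norm_nonneg _)
              _ = Cg := by rw [hnei i]; ring
          exact hd2g
      _ = (n : ℝ) * Cg := by simp [Finset.sum_const, Finset.card_univ]
  have hIglapf : IntegrableOn (fun x => g x * lap f x) Ω := by
    refine Integrable.mono' (g := fun _ => |Ag| * ((n : ℝ) * Cf))
      (integrableOn_const hbfin.ne)
      ((hgcΩ.aestronglyMeasurable hΩ.measurableSet).mul hlapfm.aestronglyMeasurable.restrict) ?_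
    filter_upwards [ae_restrict_mem hΩ.measurableSet] with x hx
    rw [Real.norm_eq_abs, abs_mul]
    have h1 : (0:ℝ) ≤ (n : ℝ) * Cf := mul_nonneg (Nat.cast_nonneg n) hCf0
    exact mul_le_mul (hAg' x hx) (hlapfb x hx) (abs_nonneg _) (abs_nonneg _)
  have hIflapg : IntegrableOn (fun x => f x * lap g x) Ω := by
    refine Integrable.mono' (g := fun _ => |Af| * ((n : ℝ) * Cg))
      (integrableOn_const hbfin.ne)
      ((hfcΩ.aestronglyMeasurable hΩ.measurableSet).mul hlapgm.aestronglyMeasurable.restrict) ?_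
    filter_upwards [ae_restrict_mem hΩ.measurableSet] with x hx
    rw [Real.norm_eq_abs, abs_mul]
    exact mul_le_mul (hAf' x hx) (hlapgb x hx) (abs_nonneg _) (abs_nonneg _)
  -- the key computation
  have hsum : Set.EqOn (fun x => g x * lap f x - f x * lap g x)
      (fun x => ∑ i : Fin n, fderiv ℝ (V i) x (ei i)) Ω := by
    intro x hx
    show g x * lap f x - f x * lap g x = ∑ i : Fin n, fderiv ℝ (V i) x (ei i)
    unfold lap
    rw [Finset.mul_sum, Finset.mul_sum, ← Finset.sum_sub_distrib]
    exact Finset.sum_congr rfl fun i _ => (hVpartial i x hx).symm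
  have hdiff0 : ∫ x in Ω, (g x * lap f x - f x * lap g x) = 0 := by
    rw [setIntegral_congr_fun hΩ.measurableSet hsum]
    rw [integral_finset_sum _ (fun i _ => hIVi i)]
    simp only [hzero, Finset.sum_const_zero]
  have hsub : (∫ x in Ω, g x * lap f x) - ∫ x in Ω, f x * lap g x = 0 := by
    rw [← integral_sub hIglapf hIflapg]
    exact hdiff0
  linarith [hsub]


end AuxiliaryLemmas

/-- `a_λ² = (λ^k/k!) ∫_Ω φ u_k dx` where `φ` is the projection of `1`
onto the eigenspace of `λ` and `a_λ² = ∫_Ω φ²`. -/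
theorem a_lambda_sq_eq_moment_integral {n : ℕ} (Ω : Set (Eucl n)) (hΩ : IsOpen Ω)
    (hne : Ω.Nonempty) (hcomp : IsCompact (closure Ω))
    (u : ℕ → Eucl n → ℝ) (hu : PoissonHierarchy Ω u)
    (lam : ℝ) (hlampos : 0 < lam)
    (φ : Eucl n → ℝ) (hφ : ContDiffOn ℝ (⊤ : ℕ∞) φ (closure Ω))
    (hφb : ∀ x ∈ frontier Ω, φ x = 0)
    (heig : ∀ x ∈ Ω, -lap φ x = lam * φ x)
    (hproj : (∫ x in Ω, φ x) = ∫ x in Ω, (φ x) ^ 2)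
    (k : ℕ) (hk : 1 ≤ k) :
    (∫ x in Ω, (φ x) ^ 2) = lam ^ k / (k.factorial : ℝ) * ∫ x in Ω, φ x * u k x := by
  have hgreen : ∀ k, 1 ≤ k →
      ∫ x in Ω, u k x * lap φ x = ∫ x in Ω, φ x * lap (u k) x :=
    fun k hk => green_symm Ω hΩ hcomp φ (u k) (hφ.of_le (WithTop.coe_le_coe.2 le_top))
      ((hu.smooth k).of_le (WithTop.coe_le_coe.2 le_top)) hφb (hu.boundary k hk)
  have hL : ∀ k, ∫ x in Ω, u k x * lap φ x = -(lam * ∫ x in Ω, φ x * u k x) := by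
    intro k
    have h1 : Set.EqOn (fun x => u k x * lap φ x)
        (fun x => -(lam * (φ x * u k x))) Ω := by
      intro x hx
      have h2 := heig x hx
      have h3 : lap φ x = -(lam * φ x) := by linarith
      show u k x * lap φ x = -(lam * (φ x * u k x))
      rw [h3]; ring
    rw [setIntegral_congr_fun hΩ.measurableSet h1, integral_neg, integral_const_mul]
  have hbase : lam * ∫ x in Ω, φ x * u 1 x = ∫ x in Ω, (φ x) ^ 2 := by
    have h4 : ∫ x in Ω, φ x * lap (u 1) x = -(∫ x in Ω, φ x) := by
      have h1 : Set.EqOn (fun x => φ x * lap (u 1) x) (fun x => -(φ x)) Ω := by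
        intro x hx
        show φ x * lap (u 1) x = -(φ x)
        rw [hu.lap_one x hx]; ring
      rw [setIntegral_congr_fun hΩ.measurableSet h1, integral_neg]
    have h5 := (hL 1).symm.trans (hgreen 1 le_rfl)
    rw [h4, hproj] at h5
    linarith
  have hstep : ∀ m : ℕ, 1 ≤ m →
      lam * ∫ x in Ω, φ x * u (m+1) x = ((m:ℝ)+1) * ∫ x in Ω, φ x * u m x := by
    intro m hm
    have h2 : 2 ≤ m + 1 := by omega
    have h4 : ∫ x in Ω, φ x * lap (u (m+1)) x
        = -(((m:ℝ)+1) * ∫ x in Ω, φ x * u m x) := by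
      have h1 : Set.EqOn (fun x => φ x * lap (u (m+1)) x)
          (fun x => -(((m:ℝ)+1) * (φ x * u m x))) Ω := by
        intro x hx
        show φ x * lap (u (m+1)) x = -(((m:ℝ)+1) * (φ x * u m x))
        rw [hu.lap_succ (m+1) h2 x hx]
        have : m + 1 - 1 = m := by omega
        rw [this]
        push_cast
        ring
      rw [setIntegral_congr_fun hΩ.measurableSet h1, integral_neg, integral_const_mul]
    have h5 := (hL (m+1)).symm.trans (hgreen (m+1) (by omega))
    rw [h4] at h5
    linarith
  induction k, hk using Nat.le_induction with
  | base =>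
    rw [← hbase]
    simp [Nat.factorial_one, pow_one]
  | succ m hm ih =>
    have hrec := hstep m hm
    have hm1 : ((m:ℝ)+1) ≠ 0 := by positivity
    have hIk : ∫ x in Ω, φ x * u m x = lam * (∫ x in Ω, φ x * u (m+1) x) / ((m:ℝ)+1) := by
      field_simp
      linarith
    rw [ih, hIk, Nat.factorial_succ]
    have hfac : ((m+1).factorial : ℝ) ≠ 0 := by positivity
    have hfac' : ((m).factorial : ℝ) ≠ 0 := by positivity
    push_cast
    field_simp
    ring
end
end

section
/- With the heat-content series setup, λ₁ = sup{ η > 0 : limsup_{n→∞} η^n T_n / n! < ∞ }, where T_n = n! Σ_{λ∈S} a_λ² λ^{-n}. -/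
open MeasureTheory Real Filter

/-!
Write `η ^ m T_m / m! = ∑_λ a_λ (η / λ) ^ m`. For `η ≤ λ₁` every ratio `η / λ` is at most `1`,
so the sum stays below `∑ a_λ`; for `η > λ₁` the single term `a_{λ₁} (η / λ₁) ^ m` already grows
geometrically. Hence `λ₁` is the greatest element of the set whose supremum is taken.
-/

theorem EReal.limsup_coe_lt_top_of_le {α : Type*} {f : Filter α} {u : α → ℝ} {C : ℝ}
    (h : ∀ᶠ x in f, u x ≤ C) : limsup (fun x => (u x : EReal)) f < ⊤ :=
  (limsup_le_of_le (by isBoundedDefault) (h.mono fun _ hx => EReal.coe_le_coe hx)).trans_lt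
    (EReal.coe_lt_top C)

theorem EReal.limsup_coe_eq_top_of_tendsto_atTop {α : Type*} {f : Filter α} [f.NeBot]
    {u : α → ℝ} (h : Tendsto u f atTop) : limsup (fun x => (u x : EReal)) f = ⊤ :=
  (EReal.tendsto_coe_nhds_top_iff.2 h).limsup_eq

section WeightedPowers

variable {ι : Type*} {a b : ι → ℝ}

theorem summable_mul_pow_of_le (ha : ∀ i, 0 ≤ a i) (hs : Summable a) (hb : ∀ i, 0 ≤ b i)
    {B : ℝ} (hbB : ∀ i, b i ≤ B) (m : ℕ) : Summable fun i => a i * b i ^ m :=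
  Summable.of_nonneg_of_le (fun i => mul_nonneg (ha i) (pow_nonneg (hb i) m))
    (fun i => mul_le_mul_of_nonneg_left (pow_le_pow_left₀ (hb i) (hbB i) m) (ha i))
    (hs.mul_right (B ^ m))

theorem tsum_mul_pow_le_tsum (ha : ∀ i, 0 ≤ a i) (hs : Summable a) (hb : ∀ i, 0 ≤ b i)
    (hb1 : ∀ i, b i ≤ 1) (m : ℕ) : ∑' i, a i * b i ^ m ≤ ∑' i, a i :=
  (summable_mul_pow_of_le ha hs hb hb1 m).tsum_le_tsum
    (fun i => mul_le_of_le_one_right (ha i) (pow_le_one₀ (hb i) (hb1 i))) hs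

theorem isGreatest_setOf_limsup_tsum_mul_div_pow_lt_top {l : ι → ℝ} {i₀ : ι}
    (ha : ∀ i, 0 ≤ a i) (hs : Summable a) (hl₀ : 0 < l i₀) (hmin : ∀ i, l i₀ ≤ l i)
    (ha₀ : 0 < a i₀) :
    IsGreatest {η : ℝ | 0 < η ∧
      limsup (fun m : ℕ => ((∑' i, a i * (η / l i) ^ m : ℝ) : EReal)) atTop < ⊤} (l i₀) := by
  have hl : ∀ i, 0 < l i := fun i => hl₀.trans_le (hmin i)
  refine ⟨⟨hl₀, EReal.limsup_coe_lt_top_of_le (Eventually.of_forall fun m =>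
    tsum_mul_pow_le_tsum ha hs (fun i => (div_pos hl₀ (hl i)).le)
      (fun i => div_le_one_of_le₀ (hmin i) (hl i).le) m)⟩, ?_⟩
  rintro η ⟨hη, hlimsup⟩
  by_contra! hlt
  have hterm : ∀ m : ℕ, a i₀ * (η / l i₀) ^ m ≤ ∑' i, a i * (η / l i) ^ m := fun m =>
    (summable_mul_pow_of_le ha hs (fun i => (div_pos hη (hl i)).le)
      (fun i => div_le_div_of_nonneg_left hη.le hl₀ (hmin i)) m).le_tsum i₀
      (fun i _ => mul_nonneg (ha i) (pow_nonneg (div_pos hη (hl i)).le m))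
  have hgrowth : Tendsto (fun m : ℕ => a i₀ * (η / l i₀) ^ m) atTop atTop :=
    (tendsto_pow_atTop_atTop_of_one_lt ((one_lt_div hl₀).2 hlt)).const_mul_atTop ha₀
  rw [EReal.limsup_coe_eq_top_of_tendsto_atTop (tendsto_atTop_mono hterm hgrowth)] at hlimsup
  exact lt_irrefl _ hlimsup

end WeightedPowers

theorem lambda_one_eq_sup_of_moment_growth_general (S : Set ℝ)
    (a : ℝ → ℝ) (ha : ∀ l, 0 ≤ a l) (hsum : Summable fun l : S => a (l : ℝ))
    (lam1 : ℝ) (hlam : IsLeast S lam1) (hlam1 : 0 < lam1) (hapos : 0 < a lam1)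
    (T : ℕ → ℝ)
    (hT : ∀ m : ℕ, T m = (m.factorial : ℝ) * ∑' l : S, a (l : ℝ) * ((l : ℝ)⁻¹) ^ m) :
    lam1 = sSup {η : ℝ | 0 < η ∧
      Filter.limsup (fun m : ℕ => ((η ^ m * T m / (m.factorial : ℝ) : ℝ) : EReal))
        Filter.atTop < ⊤} := by
  have hmoment : ∀ (η : ℝ) (m : ℕ),
      η ^ m * T m / (m.factorial : ℝ) = ∑' l : S, a l * (η / l) ^ m := by
    intro η m
    have hfac : (m.factorial : ℝ) ≠ 0 := Nat.cast_ne_zero.2 m.factorial_ne_zero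
    rw [hT m, mul_left_comm, mul_div_cancel_left₀ _ hfac, ← tsum_mul_left]
    simp only [div_eq_mul_inv, mul_pow, mul_left_comm]
  simp_rw [hmoment]
  exact (isGreatest_setOf_limsup_tsum_mul_div_pow_lt_top (l := Subtype.val)
    (i₀ := ⟨lam1, hlam.1⟩) (fun l => ha l) hsum hlam1 (fun l => hlam.2 l.2) hapos).csSup_eq.symm

/-- `λ₁ = sup {η > 0 : limsup_n η^n T_n / n! < ∞}` where
`T_n = n! Σ_{λ ∈ S} a_λ² λ^{-n}`. -/
theorem lambda_one_eq_sup_of_moment_growth (S : Set ℝ) (hS : S.Countable)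
    (hSpos : ∀ l ∈ S, 0 < l)
    (a : ℝ → ℝ) (ha : ∀ l, 0 ≤ a l) (hsum : Summable fun l : S => a (l : ℝ))
    (lam1 : ℝ) (hlam : IsLeast S lam1) (hlam1 : 0 < lam1) (hapos : 0 < a lam1)
    (T : ℕ → ℝ)
    (hT : ∀ m : ℕ, T m = (m.factorial : ℝ) * ∑' l : S, a (l : ℝ) * ((l : ℝ)⁻¹) ^ m) :
    lam1 = sSup {η : ℝ | 0 < η ∧
      Filter.limsup (fun m : ℕ => ((η ^ m * T m / (m.factorial : ℝ) : ℝ) : EReal))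
        Filter.atTop < ⊤} :=
  lambda_one_eq_sup_of_moment_growth_general S a ha hsum lam1 hlam hlam1 hapos T hT
end
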